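/- Let (X_1,...,X_n) be an exchangeable MVG random vector with parameters satisfying \theta_{\{i_1,...,i_s\}} = \theta_s for all 1 \le s \le n and all s-element subsets, with at least one \theta_s < 1. Then for 1 \le r \le n and positive integer p, the p-th factorial moment of X_{r:n} equals p! \sum_{j=0}^{r-1} (-1)^{r-1-j} \binom{n-j-1}{n-r} \binom{n}{j} ( 1/(1 - \prod_{s=1}^n \theta_s^{\binom{n}{s} - \binom{j}{s}}) - 1 )^p, with the convention \binom{j}{s} = 0 for s > j. -/

import Mathlib

open MeasureTheory ProbabilityTheory
open scoped ENNReal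

/-- The components of a multivariate geometric (MVG) vector: `X_i = min {M_I : I ∋ i}`. -/
noncomputable def mvgX {Ω : Type*} {n : ℕ}
    (M : {I : Finset (Fin n) // I.Nonempty} → Ω → ℕ) (i : Fin n) (ω : Ω) : ℕ :=
  sInf {x | ∃ I : {I : Finset (Fin n) // I.Nonempty}, i ∈ I.1 ∧ M I ω = x}

/-- The `r`-th order statistic (r-th smallest, `r ∈ {1,...,n}`) of `X_1,...,X_n`. -/
noncomputable def orderStat {Ω : Type*} {n : ℕ} (r : ℕ) (X : Fin n → Ω → ℕ) (ω : Ω) : ℕ :=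
  sInf {m | r ≤ (Finset.univ.filter (fun i => X i ω ≤ m)).card}

/-!
Write `B = {i | k < X i}`. The event `k < X_{r:n}` is `n - r < #B`, and the binomial identity
`∑_{j<r} (-1)^(r-1-j) C(n-j-1, n-r) C(m, n-j) = [n - r < m]` (for `m ≤ n`) turns its indicator
into a signed combination of the counts `C(#B, n-j) = #{S | #S = n - j, S ⊆ B}`, i.e. of the
indicators of `min_{i ∈ S} X_i > k`. That minimum exceeds `k` iff every `M_I` with `I ∩ S ≠ ∅`
does, so by independence it has a geometric tail. Finally `E (Y)_p = ∑_k p (k)_(p-1) P(Y > k)`,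
which against a tail `q^(k+1)` sums to `p! (q / (1 - q))^p`.
-/

open Finset

lemma sum_range_neg_one_pow_mul_choose_add_mul_choose (a b m : ℕ) (hm : m < a + b) :
    ∑ v ∈ range b, (-1 : ℤ) ^ v * (a + v).choose a * m.choose (a + v) =
      if m = a then 1 else 0 := by
  rcases lt_or_ge m a with hma | hma
  · rw [if_neg hma.ne]
    exact sum_eq_zero fun v _ => by rw [Nat.choose_eq_zero_of_lt (n := m) (by omega)]; simp
  obtain ⟨d, rfl⟩ := Nat.exists_eq_add_of_le hma
  have hterm : ∀ v, (-1 : ℤ) ^ v * (a + v).choose a * (a + d).choose (a + v) =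
      (a + d).choose a * ((-1) ^ v * d.choose v) := by
    intro v
    have := Nat.choose_mul (n := a + d) (k := a + v) (Nat.le_add_right a v)
    simp only [Nat.add_sub_cancel_left] at this
    rw [mul_assoc, ← Nat.cast_mul, mul_comm ((a + v).choose a), this]
    push_cast; ring
  rw [sum_congr rfl fun v _ => hterm v, ← mul_sum,
    ← sum_subset (range_subset_range.2 (show d + 1 ≤ b by omega)) fun v _ hv => by
      rw [Nat.choose_eq_zero_of_lt (by simpa using hv)]; simp,
    Int.alternating_sum_range_choose]
  rcases d with _ | d <;> simp

lemma sum_range_neg_one_pow_mul_choose_mul_choose {n r : ℕ} (hrn : r ≤ n) (m : ℕ) (hm : m ≤ n) :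
    ∑ j ∈ range r, (-1 : ℤ) ^ (r - 1 - j) * (n - j - 1).choose (n - r) * m.choose (n - j) =
      if n - r < m then 1 else 0 := by
  induction m with
  | zero =>
    rw [if_neg (Nat.not_lt_zero _)]
    exact sum_eq_zero fun j hj => by
      rw [Nat.choose_eq_zero_of_lt (n := 0) (by have := mem_range.1 hj; omega)]; simp
  | succ m ih =>
    -- By Pascal's rule the step from `m` to `m + 1` adds the sum of the previous lemma,
    -- read backwards in `j`.
    have hpascal : ∀ j ∈ range r, (-1 : ℤ) ^ (r - 1 - j) * (n - j - 1).choose (n - r) *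
        (m + 1).choose (n - j) =
          (-1) ^ (r - 1 - j) * (n - j - 1).choose (n - r) * m.choose (n - j) +
          (-1) ^ (r - 1 - j) * (n - r + (r - 1 - j)).choose (n - r) *
            m.choose (n - r + (r - 1 - j)) := by
      intro j hj
      obtain ⟨u, hu⟩ : ∃ u, n - j = u + 1 := ⟨n - j - 1, by have := mem_range.1 hj; omega⟩
      rw [show n - j - 1 = u by omega, hu, Nat.choose_succ_succ',
        show n - r + (r - 1 - j) = u by have := mem_range.1 hj; omega]
      push_cast; ring
    rw [sum_congr rfl hpascal, sum_add_distrib, ih (by omega),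
      sum_range_reflect (fun v => (-1 : ℤ) ^ v * (n - r + v).choose (n - r) *
        m.choose (n - r + v)) r,
      sum_range_neg_one_pow_mul_choose_add_mul_choose _ _ _ (by omega)]
    split_ifs <;> omega

lemma Nat.descFactorial_succ_eq_sum_range (x p : ℕ) :
    x.descFactorial (p + 1) = ∑ k ∈ range x, (p + 1) * k.descFactorial p := by
  induction x with
  | zero => simp
  | succ x ih =>
    rw [sum_range_succ, ← ih, Nat.succ_descFactorial_succ, Nat.descFactorial_succ]
    rcases le_or_gt p x with h | h
    · rw [show x + 1 = x - p + (p + 1) by omega, add_mul]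
    · simp [Nat.descFactorial_of_lt h]

lemma lintegral_descFactorial_succ {Ω : Type*} [MeasurableSpace Ω] (μ : Measure Ω) {f : Ω → ℕ}
    (hf : Measurable f) (p : ℕ) :
    ∫⁻ ω, ((f ω).descFactorial (p + 1) : ℝ≥0∞) ∂μ =
      ∑' k, ((p + 1) * k.descFactorial p : ℕ) * μ {ω | k < f ω} := by
  have hmeas : ∀ k, MeasurableSet {ω | k < f ω} := fun k => measurableSet_lt measurable_const hf
  calc ∫⁻ ω, ((f ω).descFactorial (p + 1) : ℝ≥0∞) ∂μ
      = ∫⁻ ω, ∑' k, {ω | k < f ω}.indicator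
          (fun _ => (((p + 1) * k.descFactorial p : ℕ) : ℝ≥0∞)) ω ∂μ := by
        refine lintegral_congr fun ω => ?_
        rw [tsum_eq_sum (s := range (f ω)) fun k hk =>
            Set.indicator_of_notMem (by simpa using hk) _,
          Nat.descFactorial_succ_eq_sum_range, Nat.cast_sum]
        exact sum_congr rfl fun k hk => by
          rw [Set.indicator_of_mem (show ω ∈ {ω | k < f ω} from mem_range.1 hk)]
    _ = ∑' k, ((p + 1) * k.descFactorial p : ℕ) * μ {ω | k < f ω} := by
        rw [lintegral_tsum fun k => (measurable_const.indicator (hmeas k)).aemeasurable]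
        simp_rw [lintegral_indicator_const (hmeas _)]

lemma hasSum_descFactorial_mul_geometric {𝕜 : Type*} [NormedField 𝕜] (p : ℕ) {q : 𝕜}
    (hq : ‖q‖ < 1) :
    HasSum (fun k : ℕ => (((p + 1) * k.descFactorial p : ℕ) : 𝕜) * q ^ (k + 1))
      ((p + 1).factorial * (q / (1 - q)) ^ (p + 1)) := by
  have hshift := (hasSum_choose_mul_geometric_of_norm_lt_one p hq).mul_left
    ((p + 1).factorial * q ^ (p + 1))
  have h := (hasSum_nat_add_iff (f := fun k : ℕ =>
    (((p + 1) * k.descFactorial p : ℕ) : 𝕜) * q ^ (k + 1)) p).1 (hshift.congr_fun fun k => ?_)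
  · rwa [sum_eq_zero fun k hk => by simp [Nat.descFactorial_of_lt (mem_range.1 hk)], add_zero,
      mul_one_div, mul_div_assoc, ← div_pow] at h
  · rw [Nat.descFactorial_eq_factorial_mul_choose, Nat.factorial_succ]
    push_cast
    ring

section Counting

variable {α : Type*} [Fintype α] [DecidableEq α]

lemma card_filter_inter_nonempty_card_eq (S : Finset α) (s : ℕ) :
    #{J : Finset α | (J ∩ S).Nonempty ∧ #J = s} =
      (Fintype.card α).choose s - (#Sᶜ).choose s := by
  have hsplit : ({J : Finset α | (J ∩ S).Nonempty ∧ #J = s} : Finset (Finset α)) =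
      powersetCard s univ \ powersetCard s Sᶜ := by
    ext J
    simp only [mem_filter, mem_univ, true_and, mem_sdiff, mem_powersetCard, subset_univ,
      subset_compl_iff_disjoint_right, ← not_disjoint_iff_nonempty_inter]
    tauto
  rw [hsplit, card_sdiff_of_subset (powersetCard_mono (subset_univ _)), card_powersetCard,
    card_powersetCard, card_univ]

lemma prod_filter_inter_nonempty {β : Type*} [CommMonoid β] (f : ℕ → β) (S : Finset α) :
    ∏ J ∈ univ.filter (fun J : Finset α => (J ∩ S).Nonempty), f #J =
      ∏ s ∈ Icc 1 (Fintype.card α), f s ^ ((Fintype.card α).choose s - (#Sᶜ).choose s) := by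
  have hcard : ∀ J ∈ univ.filter (fun J : Finset α => (J ∩ S).Nonempty),
      #J ∈ Icc 1 (Fintype.card α) := fun J hJ =>
    mem_Icc.2 ⟨card_pos.2 ((mem_filter.1 hJ).2.mono inter_subset_left), card_le_univ J⟩
  rw [← prod_fiberwise_of_maps_to' hcard]
  refine prod_congr rfl fun s _ => ?_
  rw [prod_const, filter_filter, card_filter_inter_nonempty_card_eq]

end Counting

section OrderStat

variable {Ω : Type*} {n : ℕ} {X : Fin n → Ω → ℕ}

lemma lt_orderStat_iff {r : ℕ} (hrn : r ≤ n) (ω : Ω) (k : ℕ) :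
    k < orderStat r X ω ↔ #{i | X i ω ≤ k} < r := by
  have hmono : Monotone fun m => #{i | X i ω ≤ m} := fun m m' hm =>
    card_le_card fun i hi => by
      simp only [mem_filter] at hi ⊢
      exact ⟨hi.1, hi.2.trans hm⟩
  have hne : {m | r ≤ #{i | X i ω ≤ m}}.Nonempty :=
    ⟨univ.sup (X · ω), by
      simpa [filter_true_of_mem fun i _ => le_sup (f := (X · ω)) (mem_univ i)] using hrn⟩
  rw [orderStat, Nat.lt_iff_add_one_le, le_csInf_iff'' hne]
  constructor
  · intro h
    by_contra! hk
    exact absurd (h k hk) (Nat.not_succ_le_self k)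
  · intro h m hm
    by_contra! hmk
    exact absurd (hm.trans (hmono (Nat.le_of_lt_succ hmk))) (not_le.2 h)

lemma indicator_lt_orderStat {r : ℕ} (hrn : r ≤ n) (ω : Ω) (k : ℕ) :
    {ω | k < orderStat r X ω}.indicator (1 : Ω → ℝ) ω =
      ∑ j ∈ range r, (-1 : ℝ) ^ (r - 1 - j) * (n - j - 1).choose (n - r) *
        ∑ S ∈ powersetCard (n - j) univ, (⋂ i ∈ S, {ω | k < X i ω}).indicator 1 ω := by
  classical
  set B : Finset (Fin n) := {i | k < X i ω}
  have hcount : ∀ m, ∑ S ∈ powersetCard m univ, (⋂ i ∈ S, {ω | k < X i ω}).indicator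
      (1 : Ω → ℝ) ω = (#B).choose m := by
    intro m
    have hfilter : (powersetCard m univ).filter (· ⊆ B) = powersetCard m B := by
      ext S
      simp [mem_powersetCard, and_comm]
    have hS : ∀ S : Finset (Fin n), (⋂ i ∈ S, {ω | k < X i ω}).indicator (1 : Ω → ℝ) ω =
        if S ⊆ B then 1 else 0 := fun S => by
      simp [Set.indicator_apply, subset_iff, B]
    rw [sum_congr rfl fun S _ => hS S, sum_boole, hfilter, card_powersetCard]
  have hAB : #{i | X i ω ≤ k} + #B = n := by
    simpa [B, not_le] using card_filter_add_card_filter_not (s := univ) (fun i => X i ω ≤ k)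
  have htail : k < orderStat r X ω ↔ n - r < #B := by
    rw [lt_orderStat_iff hrn]
    omega
  simp_rw [hcount]
  simp only [Set.indicator_apply, Set.mem_ofPred_eq, htail, Pi.one_apply]
  exact_mod_cast (sum_range_neg_one_pow_mul_choose_mul_choose hrn #B
    (card_le_univ B |>.trans_eq (Fintype.card_fin n))).symm

variable [MeasurableSpace Ω]

-- `orderStat r X` factors through `ω ↦ (X i ω)_i`, valued in the countable discrete space
-- `Fin n → ℕ`, where every function is measurable.
lemma measurable_orderStat (hX : ∀ i, Measurable (X i)) (r : ℕ) :
    Measurable (orderStat r X) :=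
  (measurable_of_countable fun x : Fin n → ℕ => orderStat r (fun i (_ : Unit) => x i) ()).comp
    (measurable_pi_lambda _ hX)

lemma measureReal_lt_orderStat (μ : Measure Ω) [IsFiniteMeasure μ] (hX : ∀ i, Measurable (X i))
    {r : ℕ} (hrn : r ≤ n) (k : ℕ) :
    μ.real {ω | k < orderStat r X ω} =
      ∑ j ∈ range r, (-1 : ℝ) ^ (r - 1 - j) * (n - j - 1).choose (n - r) *
        ∑ S ∈ powersetCard (n - j) univ, μ.real (⋂ i ∈ S, {ω | k < X i ω}) := by
  have hmeas : ∀ S : Finset (Fin n), MeasurableSet (⋂ i ∈ S, {ω | k < X i ω}) := fun S =>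
    .biInter S.countable_toSet fun i _ => measurableSet_lt measurable_const (hX i)
  have hint : ∀ S : Finset (Fin n),
      Integrable ((⋂ i ∈ S, {ω | k < X i ω}).indicator (1 : Ω → ℝ)) μ :=
    fun S => (integrable_const (1 : ℝ)).indicator (hmeas S)
  rw [← integral_indicator_one (measurableSet_lt measurable_const (measurable_orderStat hX r)),
    integral_congr_ae (ae_of_all _ (indicator_lt_orderStat hrn · k)),
    integral_finsetSum _ fun j _ => (integrable_finsetSum _ fun S _ => hint S).const_mul _]
  refine sum_congr rfl fun j _ => ?_
  rw [integral_const_mul, integral_finsetSum _ fun S _ => hint S]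
  simp_rw [integral_indicator_one (hmeas _)]

end OrderStat

-- `min_{i ∈ S} X_i` with `#S = n - j` exceeds `k` with probability `mvgMinRatio θ n j ^ (k + 1)`:
-- of the `C(n, s)` sets `I` of size `s`, all but the `C(j, s)` inside `Sᶜ` meet `S`.
def mvgMinRatio (θ : ℕ → ℝ) (n j : ℕ) : ℝ :=
  ∏ s ∈ Icc 1 n, θ s ^ (n.choose s - j.choose s)

lemma mvgMinRatio_nonneg {θ : ℕ → ℝ} (hθ0 : ∀ s, 0 ≤ θ s) (n j : ℕ) : 0 ≤ mvgMinRatio θ n j :=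
  prod_nonneg fun s _ => pow_nonneg (hθ0 s) _

lemma mvgMinRatio_lt_one {θ : ℕ → ℝ} (hθ0 : ∀ s, 0 ≤ θ s) (hθ1 : ∀ s, θ s ≤ 1) {n s₀ : ℕ}
    (hs₀ : s₀ ∈ Icc 1 n) (hθs₀ : θ s₀ < 1) {j : ℕ} (hj : j < n) : mvgMinRatio θ n j < 1 := by
  have hchoose : j.choose s₀ < n.choose s₀ := by
    obtain ⟨m, rfl⟩ : ∃ m, n = m + 1 := ⟨n - 1, by omega⟩
    obtain ⟨t, rfl⟩ : ∃ t, s₀ = t + 1 := ⟨s₀ - 1, by have := mem_Icc.1 hs₀; omega⟩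
    have := Nat.choose_pos (n := m) (k := t) (by have := mem_Icc.1 hs₀; omega)
    have := Nat.choose_le_choose (t + 1) (show j ≤ m by omega)
    rw [Nat.choose_succ_succ']
    omega
  calc mvgMinRatio θ n j
      = θ s₀ ^ (n.choose s₀ - j.choose s₀) *
          ∏ s ∈ (Icc 1 n).erase s₀, θ s ^ (n.choose s - j.choose s) :=
        (mul_prod_erase _ _ hs₀).symm
    _ ≤ θ s₀ ^ (n.choose s₀ - j.choose s₀) :=
        mul_le_of_le_one_right (pow_nonneg (hθ0 s₀) _)
          (prod_le_one (fun s _ => pow_nonneg (hθ0 s) _) fun s _ => pow_le_one₀ (hθ0 s) (hθ1 s))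
    _ < 1 := pow_lt_one₀ (hθ0 s₀) hθs₀ (by omega)

section MVG

variable {Ω : Type*} {n : ℕ} {M : {I : Finset (Fin n) // I.Nonempty} → Ω → ℕ}

lemma lt_mvgX_iff (i : Fin n) (ω : Ω) (k : ℕ) :
    k < mvgX M i ω ↔ ∀ I : {I : Finset (Fin n) // I.Nonempty}, i ∈ I.1 → k < M I ω := by
  have hne : {x | ∃ I : {I : Finset (Fin n) // I.Nonempty}, i ∈ I.1 ∧ M I ω = x}.Nonempty :=
    ⟨_, ⟨{i}, singleton_nonempty i⟩, mem_singleton_self i, rfl⟩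
  rw [mvgX, Nat.lt_iff_add_one_le, le_csInf_iff'' hne]
  exact ⟨fun h I hI => h _ ⟨I, hI, rfl⟩, fun h _ ⟨I, hI, hx⟩ => hx ▸ h I hI⟩

lemma iInter_lt_mvgX (S : Finset (Fin n)) (k : ℕ) :
    ⋂ i ∈ S, {ω | k < mvgX M i ω} =
      ⋂ I ∈ univ.filter (fun I => (I.1 ∩ S).Nonempty), {ω | k < M I ω} := by
  ext ω
  simp only [Set.mem_iInter, Set.mem_ofPred_eq, lt_mvgX_iff, mem_filter, mem_univ, true_and]
  exact ⟨fun h I ⟨i, hi⟩ => h i (mem_inter.1 hi).2 I (mem_inter.1 hi).1,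
    fun h i hiS I hiI => h I ⟨i, mem_inter.2 ⟨hiI, hiS⟩⟩⟩

variable [MeasurableSpace Ω]

lemma measurable_mvgX (hM : ∀ I, Measurable (M I)) (i : Fin n) :
    Measurable (mvgX M i) :=
  (measurable_of_countable fun x : {I : Finset (Fin n) // I.Nonempty} → ℕ =>
    mvgX (fun I (_ : Unit) => x I) i ()).comp (measurable_pi_lambda _ hM)

variable {μ : Measure Ω} {θ : ℕ → ℝ}

lemma measureReal_iInter_lt_mvgX (hθ0 : ∀ s, 0 ≤ θ s) (hindep : iIndepFun M μ)
    (hgeo : ∀ (I : {I : Finset (Fin n) // I.Nonempty}) (k : ℕ),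
      μ {ω | k < M I ω} = ENNReal.ofReal (θ I.1.card ^ (k + 1)))
    (S : Finset (Fin n)) (k : ℕ) :
    μ.real (⋂ i ∈ S, {ω | k < mvgX M i ω}) = mvgMinRatio θ n #Sᶜ ^ (k + 1) := by
  have hsubtype : univ.filter (fun I : {I : Finset (Fin n) // I.Nonempty} => (I.1 ∩ S).Nonempty) =
      (univ.filter fun J : Finset (Fin n) => (J ∩ S).Nonempty).subtype Finset.Nonempty := by
    ext I
    simp
  rw [iInter_lt_mvgX, measureReal_def,
    hindep.meas_biInter (s := fun I => {ω | k < M I ω})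
      fun I _ => ⟨Set.Ioi k, measurableSet_Ioi, rfl⟩, ENNReal.toReal_prod,
    prod_congr rfl fun I _ => (congrArg ENNReal.toReal (hgeo I k)).trans
      (ENNReal.toReal_ofReal (pow_nonneg (hθ0 _) _)),
    prod_pow, hsubtype, prod_subtype_of_mem (fun J => θ #J) fun J hJ =>
      (mem_filter.1 hJ).2.mono inter_subset_left, prod_filter_inter_nonempty, Fintype.card_fin,
    mvgMinRatio]

lemma measureReal_lt_orderStat_mvgX [IsFiniteMeasure μ] (hθ0 : ∀ s, 0 ≤ θ s)
    (hM : ∀ I, Measurable (M I)) (hindep : iIndepFun M μ)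
    (hgeo : ∀ (I : {I : Finset (Fin n) // I.Nonempty}) (k : ℕ),
      μ {ω | k < M I ω} = ENNReal.ofReal (θ I.1.card ^ (k + 1)))
    {r : ℕ} (hrn : r ≤ n) (k : ℕ) :
    μ.real {ω | k < orderStat r (mvgX M) ω} =
      ∑ j ∈ range r, (-1 : ℝ) ^ (r - 1 - j) * (n - j - 1).choose (n - r) * n.choose j *
        mvgMinRatio θ n j ^ (k + 1) := by
  rw [measureReal_lt_orderStat μ (measurable_mvgX hM) hrn]
  refine sum_congr rfl fun j hj => ?_
  have hjn : j ≤ n := (mem_range.1 hj).le.trans hrn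
  have hcompl : ∀ S ∈ powersetCard (n - j) (univ : Finset (Fin n)), #Sᶜ = j := fun S hS => by
    rw [card_compl, (mem_powersetCard.1 hS).2, Fintype.card_fin]
    omega
  rw [sum_congr rfl fun S hS => by rw [measureReal_iInter_lt_mvgX hθ0 hindep hgeo, hcompl S hS],
    sum_const, card_powersetCard, card_univ, Fintype.card_fin, Nat.choose_symm hjn, nsmul_eq_mul]
  ring

end MVG

theorem stmt19_general {Ω : Type*} [MeasurableSpace Ω] (μ : Measure Ω) [IsProbabilityMeasure μ]
    {n : ℕ} (θ : ℕ → ℝ) (hθ0 : ∀ s, 0 ≤ θ s) (hθ1 : ∀ s, θ s ≤ 1)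
    (hlt : ∃ s, 1 ≤ s ∧ s ≤ n ∧ θ s < 1)
    (M : {I : Finset (Fin n) // I.Nonempty} → Ω → ℕ)
    (hM : ∀ I, Measurable (M I))
    (hindep : iIndepFun M μ)
    (hgeo : ∀ (I : {I : Finset (Fin n) // I.Nonempty}) (k : ℕ),
      μ {ω | k < M I ω} = ENNReal.ofReal (θ I.1.card ^ (k + 1)))
    (r : ℕ) (hrn : r ≤ n) (p : ℕ) (hp : 1 ≤ p) :
    (∫⁻ ω, (((∏ j ∈ Finset.range p, (orderStat r (fun i => mvgX M i) ω - j)) : ℕ) : ℝ≥0∞) ∂μ).toReal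
      = (p.factorial : ℝ) *
        ∑ j ∈ Finset.range r, (-1 : ℝ) ^ (r - 1 - j) * ((n - j - 1).choose (n - r)) *
          (n.choose j) *
          (1 / (1 - ∏ s ∈ Finset.Icc 1 n, θ s ^ (n.choose s - j.choose s)) - 1) ^ p := by
  obtain ⟨s₀, hs₀1, hs₀n, hθs₀⟩ := hlt
  obtain ⟨p, rfl⟩ : ∃ p', p = p' + 1 := ⟨p - 1, by omega⟩
  have hq : ∀ j ∈ range r, ‖mvgMinRatio θ n j‖ < 1 := fun j hj => by
    rw [Real.norm_of_nonneg (mvgMinRatio_nonneg hθ0 n j)]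
    exact mvgMinRatio_lt_one hθ0 hθ1 (mem_Icc.2 ⟨hs₀1, hs₀n⟩) hθs₀ ((mem_range.1 hj).trans_le hrn)
  have hseries := hasSum_sum fun j hj =>
    (hasSum_descFactorial_mul_geometric p (hq j hj)).mul_left
      ((-1 : ℝ) ^ (r - 1 - j) * (n - j - 1).choose (n - r) * n.choose j)
  simp_rw [← Nat.descFactorial_eq_prod_range]
  rw [lintegral_descFactorial_succ μ (measurable_orderStat (measurable_mvgX hM) r),
    ENNReal.tsum_toReal_eq fun k => by finiteness]
  simp_rw [ENNReal.toReal_mul, ENNReal.toReal_natCast, ← measureReal_def,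
    measureReal_lt_orderStat_mvgX hθ0 hM hindep hgeo hrn, mul_sum]
  refine (hseries.congr_fun fun k => sum_congr rfl fun j _ => by ring).tsum_eq.trans
    (sum_congr rfl fun j hj => ?_)
  have hq1 : 1 - mvgMinRatio θ n j ≠ 0 := sub_ne_zero.2 (ne_of_gt (lt_of_abs_lt (hq j hj)))
  rw [show ∏ s ∈ Icc 1 n, θ s ^ (n.choose s - j.choose s) = mvgMinRatio θ n j from rfl,
    div_sub_one hq1, sub_sub_cancel]
  ring

/-- Factorial moments of order statistics of an exchangeable MVG vector whose parameters
`θ_I = θ_{|I|}` depend only on the cardinality of `I`. -/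
theorem stmt19 {Ω : Type*} [MeasurableSpace Ω] (μ : Measure Ω) [IsProbabilityMeasure μ]
    {n : ℕ} (θ : ℕ → ℝ) (hθ0 : ∀ s, 0 ≤ θ s) (hθ1 : ∀ s, θ s ≤ 1)
    (hlt : ∃ s, 1 ≤ s ∧ s ≤ n ∧ θ s < 1)
    (M : {I : Finset (Fin n) // I.Nonempty} → Ω → ℕ)
    (hM : ∀ I, Measurable (M I))
    (hindep : iIndepFun M μ)
    (hgeo : ∀ (I : {I : Finset (Fin n) // I.Nonempty}) (k : ℕ),
      μ {ω | k < M I ω} = ENNReal.ofReal (θ I.1.card ^ (k + 1)))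
    (r : ℕ) (hr : 1 ≤ r) (hrn : r ≤ n) (p : ℕ) (hp : 1 ≤ p) :
    (∫⁻ ω, (((∏ j ∈ Finset.range p, (orderStat r (fun i => mvgX M i) ω - j)) : ℕ) : ℝ≥0∞) ∂μ).toReal
      = (p.factorial : ℝ) *
        ∑ j ∈ Finset.range r, (-1 : ℝ) ^ (r - 1 - j) * ((n - j - 1).choose (n - r)) *
          (n.choose j) *
          (1 / (1 - ∏ s ∈ Finset.Icc 1 n, θ s ^ (n.choose s - j.choose s)) - 1) ^ p :=
  stmt19_general μ θ hθ0 hθ1 hlt M hM hindep hgeo r hrn p hp
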